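/- arXiv:2107.09696 — 3 statements merged into one kernel-verified Lean document; each statement's English description precedes it below -/
import Mathlib

section
/- Let 𝒮 be a 1-nested compatible set pair system on X. Suppose P and P' form a reticulation cycle in D(𝒮), i.e., P and P' are distinct directed paths in D(𝒮) (sequences of elements of 𝒮 in which each element covers the next in (𝒮,≤), each containing at least two elements) with the same first element and the same last element, and no elements in common other than their first and last elements. Then there exist (S,H), (S',H) ∈ 𝒮 with H ≠ ∅ and S ∩ S' = ∅ such that {P,P'} = {P(S,H), P(S',H)}; in particular, the common last element of P and P' is (H,∅), so H is uniquely determined by the reticulation cycle. Moreover, for every (S'',H'') ∈ 𝒮 with H'' ≠ ∅ and H'' ≠ H, the directed path P(S'',H'') has no arc in common with P or with P' (an arc being a pair of consecutive elements of the path). -/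
open Set

variable {X : Type*}

/-- A set pair on `X`: an ordered pair `(S,H)` of subsets of `X` with `S ≠ ∅` and `S ∩ H = ∅`. -/
def IsSetPair (p : Set X × Set X) : Prop :=
  p.1 ≠ ∅ ∧ p.1 ∩ p.2 = ∅

/-- A set pair system on `X`: a collection of set pairs on `X`. -/
def IsSPS (𝒮 : Set (Set X × Set X)) : Prop :=
  ∀ p ∈ 𝒮, IsSetPair p

/-- The strict relation `<` on set pairs: `(S₁,H₁) < (S₂,H₂)` iff they are distinct and
(a) `S₁ ∪ H₁ ⊆ S₂`, or (b) `S₁ ∪ H₁ ⊆ H₂`, or (c) `S₁ ⊊ S₂` and `H₁ = H₂ ≠ ∅`. -/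
def splt (p q : Set X × Set X) : Prop :=
  p ≠ q ∧ (p.1 ∪ p.2 ⊆ q.1 ∨ p.1 ∪ p.2 ⊆ q.2 ∨ (p.1 ⊂ q.1 ∧ p.2 = q.2 ∧ q.2 ≠ ∅))

/-- `(S₁,H₁) ≤ (S₂,H₂)` iff `(S₁,H₁) < (S₂,H₂)` or `(S₁,H₁) = (S₂,H₂)`. -/
def sple (p q : Set X × Set X) : Prop :=
  splt p q ∨ p = q

/-- Exactly one of four propositions holds. -/
def ExactlyOne4 (a b c d : Prop) : Prop :=
  (a ∧ ¬b ∧ ¬c ∧ ¬d) ∨ (¬a ∧ b ∧ ¬c ∧ ¬d) ∨ (¬a ∧ ¬b ∧ c ∧ ¬d) ∨ (¬a ∧ ¬b ∧ ¬c ∧ d)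

/-- Exactly one of three propositions holds. -/
def ExactlyOne3 (a b c : Prop) : Prop :=
  (a ∧ ¬b ∧ ¬c) ∨ (¬a ∧ b ∧ ¬c) ∨ (¬a ∧ ¬b ∧ c)

/-- A 1-nested compatible set pair system on `X`: a set pair system satisfying (NC1)–(NC5). -/
def OneNestedCompatible (𝒮 : Set (Set X × Set X)) : Prop :=
  IsSPS 𝒮 ∧
  -- (NC1)
  (((Set.univ : Set X), (∅ : Set X)) ∈ 𝒮) ∧
  -- (NC2)
  (∀ x : X, (({x} : Set X), (∅ : Set X)) ∈ 𝒮) ∧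
  -- (NC3)
  (∀ p ∈ 𝒮, p.2 ≠ ∅ → ((p.2, (∅ : Set X)) : Set X × Set X) ∈ 𝒮) ∧
  -- (NC4)
  (∀ p ∈ 𝒮, ∀ q ∈ 𝒮, p ≠ q →
    ExactlyOne4 (splt p q) (splt q p)
      ((p.1 ∪ p.2) ∩ (q.1 ∪ q.2) = ∅)
      (p.1 ∩ q.1 = ∅ ∧ p.2 = q.2 ∧ p.2 ≠ ∅)) ∧
  -- (NC5)
  (¬ ∃ p ∈ 𝒮, ∃ q ∈ 𝒮, ∃ r ∈ 𝒮,
    p.2 = q.2 ∧ q.2 = r.2 ∧ p.2 ≠ ∅ ∧ p.1 ∩ q.1 = ∅ ∧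
    (p.1 ∪ q.1 ⊆ r.1 ∨ (p.1 ∪ q.1) ∩ r.1 = ∅))

/-- `p` covers `q` in the partial order `(𝒮,≤)`: an arc from `p` to `q`
in the Hasse diagram `D(𝒮)`; `p` is a parent of `q`, and `q` is a child of `p`. -/
def SPCovers (𝒮 : Set (Set X × Set X)) (p q : Set X × Set X) : Prop :=
  p ∈ 𝒮 ∧ q ∈ 𝒮 ∧ splt q p ∧ ¬ ∃ r ∈ 𝒮, splt q r ∧ splt r p

/-- `L` is the directed path `P(S,H)` in `D(𝒮)` associated with `(S,H) ∈ 𝒮`, `H ≠ ∅`: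
a sequence `(q₀,…,q_m)` of elements of `𝒮` with `m ≥ 2` in which `q_j` covers `q_{j+1}`,
such that `q_m = (H,∅)`, every interior `q_j` (`1 ≤ j ≤ m-1`) has second component `H`,
`q_i = (S,H)` for some `1 ≤ i ≤ m-1`, and the first element `q₀ = (S₊,H₊)` satisfies
`S ∪ H ⊆ S₊` and `H₊ ≠ H`. -/
def IsSPPath (𝒮 : Set (Set X × Set X)) (S H : Set X) (L : List (Set X × Set X)) : Prop :=
  3 ≤ L.length ∧
  List.Chain' (fun a b => SPCovers 𝒮 a b) L ∧
  L.getLast? = some ((H, (∅ : Set X)) : Set X × Set X) ∧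
  (∀ i : ℕ, ∀ p : Set X × Set X, 1 ≤ i → i + 1 < L.length → L[i]? = some p → p.2 = H) ∧
  (∃ i : ℕ, 1 ≤ i ∧ i + 1 < L.length ∧ L[i]? = some ((S, H) : Set X × Set X)) ∧
  (∃ p : Set X × Set X, L.head? = some p ∧ S ∪ H ⊆ p.1 ∧ p.2 ≠ H)

/-- A directed path in the Hasse diagram `D(𝒮)`: a sequence of at least two elements of `𝒮`
in which each element covers the next. -/
def IsDirPath (𝒮 : Set (Set X × Set X)) (L : List (Set X × Set X)) : Prop :=
  2 ≤ L.length ∧ List.Chain' (fun a b => SPCovers 𝒮 a b) L ∧ ∀ p ∈ L, p ∈ 𝒮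

/-!
The two paths end in a common vertex `b` with two distinct parents; by (NC4) these parents are
`(S, H)` and `(S', H)` with `S ∩ S' = ∅`, `H ≠ ∅`, and then `b = (H, ∅)`. A set pair with
nonempty second component has a unique parent, which lies below every element of `𝒮` above it.
Climbing both paths from `b`, let `u` (resp. `u'`) be the first vertex whose second component is
not `H`. If `u` were an inner vertex, it would lie above every set pair with second component
`H`, hence above `u'`; as `u'` cannot be the common head (which lies above `u`), it is an inner
vertex too, and symmetrically `u` lies below `u'`, a contradiction. So all inner vertices have
second component `H`, and (NC5) applied to the two children of the head shows that the head
does not. This is exactly the shape of `P(S, H)` and `P(S', H)`, and two such paths with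
different `H` share no arc, because the target of each arc determines `H`.
-/

variable {p q r t u v w : Set X × Set X}

theorem splt.support_subset (h : splt p q) : p.1 ∪ p.2 ⊆ q.1 ∪ q.2 := by
  obtain ⟨-, h | h | ⟨h, h2, -⟩⟩ := h
  · exact h.trans subset_union_left
  · exact h.trans subset_union_right
  · exact union_subset_union h.subset h2.le

theorem splt.asymm (hp : IsSetPair p) (hq : IsSetPair q) (h : splt p q) : ¬ splt q p := by
  rintro ⟨-, h'⟩
  obtain ⟨hne, h⟩ := h
  obtain ⟨hp1, hp2⟩ := hp
  obtain ⟨hq1, hq2⟩ := hq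
  simp only [ssubset_def, subset_def, Set.ext_iff, mem_union, mem_inter_iff,
    mem_empty_iff_false, ne_eq, Prod.ext_iff] at *
  grind

theorem splt.trans (hp : IsSetPair p) (hq : IsSetPair q) (h₁ : splt p q) (h₂ : splt q r) :
    splt p r := by
  refine ⟨?_, ?_⟩
  · rintro rfl
    exact h₁.asymm hp hq h₂
  obtain ⟨-, h₁⟩ := h₁
  obtain ⟨-, h₂⟩ := h₂
  simp only [ssubset_def, subset_def, Set.ext_iff, mem_union, ne_eq, mem_empty_iff_false] at *
  grind

theorem splt.fst_ssubset_of_snd_eq (hp : IsSetPair p) (hq : IsSetPair q) (h : splt p q)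
    (h2 : p.2 = q.2) (hne : q.2 ≠ ∅) : p.1 ⊂ q.1 := by
  obtain ⟨-, h⟩ := h
  obtain ⟨hp1, hp2⟩ := hp
  obtain ⟨hq1, hq2⟩ := hq
  simp only [ssubset_def, subset_def, Set.ext_iff, mem_union, mem_inter_iff,
    mem_empty_iff_false, ne_eq] at *
  grind

variable {𝒮 : Set (Set X × Set X)}

namespace OneNestedCompatible

theorem isSetPair (h : OneNestedCompatible 𝒮) (hp : p ∈ 𝒮) : IsSetPair p := h.1 p hp

theorem snd_empty_mem (h : OneNestedCompatible 𝒮) (hp : p ∈ 𝒮) (hp2 : p.2 ≠ ∅) :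
    (p.2, ∅) ∈ 𝒮 :=
  h.2.2.2.1 p hp hp2

theorem compat (h : OneNestedCompatible 𝒮) (hp : p ∈ 𝒮) (hq : q ∈ 𝒮) (hne : p ≠ q) :
    splt p q ∨ splt q p ∨ (p.1 ∪ p.2) ∩ (q.1 ∪ q.2) = ∅ ∨
      (p.1 ∩ q.1 = ∅ ∧ p.2 = q.2 ∧ p.2 ≠ ∅) := by
  rcases h.2.2.2.2.1 p hp q hq hne with ⟨h, -⟩ | ⟨-, h, -⟩ | ⟨-, -, h, -⟩ | ⟨-, -, -, h⟩ <;> tauto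

end OneNestedCompatible

namespace SPCovers

theorem not_splt (hc : SPCovers 𝒮 w v) (hu : u ∈ 𝒮) (hvu : splt v u) : ¬ splt u w :=
  fun huw => hc.2.2.2 ⟨u, hu, hvu, huw⟩

/-- Otherwise `(w.2, ∅) ∈ 𝒮` would lie strictly between `v` and `w`. -/
theorem eq_of_support_subset_snd (h : OneNestedCompatible 𝒮) (hc : SPCovers 𝒮 w v)
    (hsub : v.1 ∪ v.2 ⊆ w.2) : v = (w.2, ∅) := by
  have hw2 : w.2 ≠ ∅ := fun hw2 =>
    (h.isSetPair hc.2.1).1 (subset_empty_iff.1 (hw2 ▸ subset_union_left.trans hsub))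
  by_contra hne
  refine hc.not_splt (h.snd_empty_mem hc.1 hw2) ⟨hne, Or.inl hsub⟩ ⟨?_, Or.inr (Or.inl ?_)⟩
  · intro hw
    exact hw2 (congrArg Prod.snd hw).symm
  · simp

theorem support_subset_fst (h : OneNestedCompatible 𝒮) (hc : SPCovers 𝒮 w v) (hv : v.2 ≠ ∅)
    (hne : w.2 ≠ v.2) : v.1 ∪ v.2 ⊆ w.1 := by
  obtain ⟨-, hsub | hsub | ⟨-, h2, -⟩⟩ := hc.2.2.1
  · exact hsub
  · exact absurd (congrArg Prod.snd (hc.eq_of_support_subset_snd h hsub)) hv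
  · exact absurd h2.symm hne

theorem fst_inter_eq_empty (h : OneNestedCompatible 𝒮) (hu : SPCovers 𝒮 t u)
    (hv : SPCovers 𝒮 t v) (hne : u ≠ v) (h2 : u.2 = v.2) (hu2 : u.2 ≠ ∅) :
    u.1 ∩ v.1 = ∅ := by
  rcases h.compat hu.2.1 hv.2.1 hne with huv | hvu | hdisj | ⟨hdisj, -⟩
  · exact absurd hv.2.2.1 (hu.not_splt hv.2.1 huv)
  · exact absurd hu.2.2.1 (hv.not_splt hu.2.1 hvu)
  · refine absurd (subset_empty_iff.1 ?_) hu2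
    rw [← hdisj]
    exact subset_inter subset_union_right (h2 ▸ subset_union_right)
  · exact hdisj

theorem eq_snd_empty_of_ne (h : OneNestedCompatible 𝒮) (hu : SPCovers 𝒮 u v)
    (hw : SPCovers 𝒮 w v) (hne : u ≠ w) :
    u.1 ∩ w.1 = ∅ ∧ u.2 = w.2 ∧ u.2 ≠ ∅ ∧ v = (u.2, ∅) := by
  obtain ⟨x, hx⟩ := nonempty_iff_ne_empty.2 (h.isSetPair hu.2.1).1
  have hxu := hu.2.2.1.support_subset (mem_union_left _ hx)
  have hxw := hw.2.2.1.support_subset (mem_union_left _ hx)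
  rcases h.compat hu.1 hw.1 hne with huw | hwu | hdisj | ⟨hdisj, h2, hu2⟩
  · exact absurd huw (hw.not_splt hu.1 hu.2.2.1)
  · exact absurd hwu (hu.not_splt hw.1 hw.2.2.1)
  · exact absurd (hdisj ▸ mem_inter hxu hxw) (notMem_empty x)
  refine ⟨hdisj, h2, hu2, hu.eq_of_support_subset_snd h ?_⟩
  obtain ⟨-, hvu⟩ := hu.2.2.1
  obtain ⟨hv1, -⟩ := h.isSetPair hu.2.1
  obtain ⟨-, hu12⟩ := h.isSetPair hu.1
  have hvw := hw.2.2.1.support_subset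
  simp only [ssubset_def, subset_def, Set.ext_iff, mem_union, mem_inter_iff,
    mem_empty_iff_false, ne_eq] at *
  grind

theorem eq_or_splt_of_splt (h : OneNestedCompatible 𝒮) (hc : SPCovers 𝒮 w v) (hv : v.2 ≠ ∅)
    (hu : u ∈ 𝒮) (hvu : splt v u) : w = u ∨ splt w u := by
  by_cases hwu : w = u
  · exact Or.inl hwu
  obtain ⟨x, hx⟩ := nonempty_iff_ne_empty.2 (h.isSetPair hc.2.1).1
  have hxw := hc.2.2.1.support_subset (mem_union_left _ hx)
  have hxu := hvu.support_subset (mem_union_left _ hx)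
  rcases h.compat hc.1 hu hwu with hlt | hgt | hdisj | ⟨hdisj, h2, -⟩
  · exact Or.inr hlt
  · exact absurd hgt (hc.not_splt hu hvu)
  · exact absurd (hdisj ▸ mem_inter hxw hxu) (notMem_empty x)
  obtain ⟨-, hvw⟩ := hc.2.2.1
  have hsnd := hc.eq_of_support_subset_snd h
  obtain ⟨-, hw12⟩ := h.isSetPair hc.1
  have hxw1 : x ∈ w.1 := by
    rcases hvw with hsub | hsub | ⟨hsub, -⟩
    · exact hsub (mem_union_left _ hx)
    · exact absurd (congrArg Prod.snd (hsnd hsub)) hv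
    · exact hsub.subset hx
  rcases hxu with hxu | hxu
  · exact absurd (hdisj ▸ mem_inter hxw1 hxu) (notMem_empty x)
  · exact absurd (hw12 ▸ mem_inter hxw1 (h2 ▸ hxu)) (notMem_empty x)

theorem splt_of_snd_eq (h : OneNestedCompatible 𝒮) (hc : SPCovers 𝒮 w v) (hv : v.2 ≠ ∅)
    (hne : w.2 ≠ v.2) (hu : u ∈ 𝒮) (hu2 : u.2 = v.2) : splt u w := by
  have hsub := hc.support_subset_fst h hv hne
  have hvw := hc.2.2.1.support_subset
  obtain ⟨hv1, hv12⟩ := h.isSetPair hc.2.1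
  obtain ⟨-, hu12⟩ := h.isSetPair hu
  have huw : u ≠ w := fun e => hne (e ▸ hu2)
  rcases h.compat hu hc.1 huw with hlt | ⟨-, hgt⟩ | hdisj | ⟨-, h2, -⟩
  · exact hlt
  · simp only [ssubset_def, subset_def, mem_union, mem_inter_iff, Set.ext_iff,
      mem_empty_iff_false, ne_eq] at *
    grind
  · simp only [subset_def, mem_union, mem_inter_iff, Set.ext_iff, mem_empty_iff_false,
      ne_eq] at *
    grind
  · exact absurd (h2.symm.trans hu2) hne

end SPCovers

theorem Nat.exists_lt_forall_Ioc {Q : ℕ → Prop} :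
    ∀ {m : ℕ}, 0 < m → Q m → ∃ k < m, (∀ j, k < j → j ≤ m → Q j) ∧ (k = 0 ∨ ¬ Q k)
  | 1, _, hQ => ⟨0, one_pos, fun j hj hj' => by rwa [show j = 1 by omega], Or.inl rfl⟩
  | m + 2, _, hQ => by
    by_cases hQ' : Q (m + 1)
    · obtain ⟨k, hk, hrun, htop⟩ := Nat.exists_lt_forall_Ioc m.succ_pos hQ'
      refine ⟨k, by omega, fun j hj hj' => ?_, htop⟩
      rcases Nat.lt_or_eq_of_le hj' with hj' | rfl
      exacts [hrun j hj (by omega), hQ]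
    · exact ⟨m + 1, by omega, fun j hj hj' => by rwa [show j = m + 2 by omega], Or.inr hQ'⟩

namespace List

variable {α : Type*} {R : α → α → Prop} {l : List α} {a b : α} {i j : ℕ}

theorem IsChain.rel_of_getElem? (hl : l.IsChain R) (ha : l[i]? = some a)
    (hb : l[i + 1]? = some b) : R a b := by
  obtain ⟨-, rfl⟩ := getElem?_eq_some_iff.1 ha
  obtain ⟨hi, rfl⟩ := getElem?_eq_some_iff.1 hb
  exact isChain_iff_getElem.1 hl i hi

theorem Pairwise.rel_of_getElem? (hl : l.Pairwise R) (hij : i < j) (ha : l[i]? = some a)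
    (hb : l[j]? = some b) : R a b := by
  obtain ⟨hi, rfl⟩ := getElem?_eq_some_iff.1 ha
  obtain ⟨hj, rfl⟩ := getElem?_eq_some_iff.1 hb
  exact pairwise_iff_getElem.1 hl i j hi hj hij

theorem exists_getElem?_of_mem_zip_tail {x : α × α} (hx : x ∈ l.zip l.tail) :
    ∃ k, l[k]? = some x.1 ∧ l[k + 1]? = some x.2 := by
  obtain ⟨k, hk, rfl⟩ := mem_iff_getElem.1 hx
  simp only [length_zip, length_tail, lt_min_iff] at hk
  exact ⟨k, by simp [getElem_zip], by simp [getElem_zip]⟩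

end List

theorem pairwise_splt_of_isChain (hS : IsSPS 𝒮) {L : List (Set X × Set X)}
    (hL : L.IsChain (SPCovers 𝒮)) : L.Pairwise (fun a b => splt b a) := by
  let R : Set X × Set X → Set X × Set X → Prop := fun a b => IsSetPair a ∧ IsSetPair b ∧ splt b a
  have : Trans R R R := ⟨fun ⟨ha, hb, hba⟩ ⟨_, hc, hcb⟩ => ⟨ha, hc, hcb.trans hc hb hba⟩⟩
  have hR : L.IsChain R := hL.imp fun a b hab => ⟨hS a hab.1, hS b hab.2.1, hab.2.2.1⟩
  exact hR.pairwise.imp (·.2.2)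

structure IsReticulationCycle (𝒮 : Set (Set X × Set X)) (P P' : List (Set X × Set X)) :
    Prop where
  isDirPath_left : IsDirPath 𝒮 P
  isDirPath_right : IsDirPath 𝒮 P'
  ne : P ≠ P'
  head?_eq : P.head? = P'.head?
  getLast?_eq : P.getLast? = P'.getLast?
  eq_of_mem_of_mem : ∀ p, p ∈ P → p ∈ P' → P.head? = some p ∨ P.getLast? = some p

namespace IsReticulationCycle

variable {P P' : List (Set X × Set X)} {S S' H : Set X} {i k : ℕ}

theorem symm (hc : IsReticulationCycle 𝒮 P P') : IsReticulationCycle 𝒮 P' P :=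
  ⟨hc.isDirPath_right, hc.isDirPath_left, hc.ne.symm, hc.head?_eq.symm, hc.getLast?_eq.symm,
    fun p hp' hp => hc.head?_eq ▸ hc.getLast?_eq ▸ hc.eq_of_mem_of_mem p hp hp'⟩

theorem covers (hc : IsReticulationCycle 𝒮 P P') (hu : P[i]? = some u)
    (hv : P[i + 1]? = some v) : SPCovers 𝒮 u v :=
  hc.isDirPath_left.2.1.rel_of_getElem? hu hv

theorem splt_of_lt (h : OneNestedCompatible 𝒮) (hc : IsReticulationCycle 𝒮 P P') (hik : i < k)
    (hu : P[i]? = some u) (hv : P[k]? = some v) : splt v u :=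
  (pairwise_splt_of_isChain h.1 hc.isDirPath_left.2.1).rel_of_getElem? hik hu hv

theorem mem (hc : IsReticulationCycle 𝒮 P P') (hu : P[i]? = some u) : u ∈ 𝒮 :=
  hc.isDirPath_left.2.2 u (List.mem_of_getElem? hu)

theorem notMem_right (h : OneNestedCompatible 𝒮) (hc : IsReticulationCycle 𝒮 P P')
    (hi : 1 ≤ i) (hi' : i + 1 < P.length) (hu : P[i]? = some u) : u ∉ P' := by
  intro hu'
  rcases hc.eq_of_mem_of_mem u (List.mem_of_getElem? hu) hu' with hfst | hlst
  · rw [List.head?_eq_getElem?] at hfst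
    exact (hc.splt_of_lt h (by omega) hfst hu).1 rfl
  · rw [List.getLast?_eq_getElem?] at hlst
    exact (hc.splt_of_lt h (by omega) hu hlst).1 rfl

theorem three_le_length (h : OneNestedCompatible 𝒮) (hc : IsReticulationCycle 𝒮 P P') :
    3 ≤ P.length := by
  by_contra hlen
  obtain ⟨t, b, rfl⟩ := (List.length_eq_two (l := P)).1 (by have := hc.isDirPath_left.1; omega)
  have hcov : SPCovers 𝒮 t b := List.isChain_pair.1 hc.isDirPath_left.2.1
  have ht : P'[0]? = some t := by simpa [List.head?_eq_getElem?] using hc.head?_eq.symm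
  have hb : P'[P'.length - 1]? = some b := by
    simpa [List.getLast?_eq_getElem?] using hc.getLast?_eq.symm
  have hlen' := hc.isDirPath_right.1
  by_cases hlen2 : P'.length = 2
  · obtain ⟨t', b', rfl⟩ := List.length_eq_two.1 hlen2
    simp only [List.length_cons, List.length_nil, Nat.reduceAdd, Nat.add_one_sub_one,
      List.getElem?_cons_zero, List.getElem?_cons_succ, Option.some.injEq] at ht hb
    exact hc.ne (by rw [ht, hb])
  obtain ⟨u, hu⟩ : ∃ u, P'[1]? = some u := ⟨P'[1], List.getElem?_eq_getElem (by omega)⟩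
  exact hcov.not_splt (hc.symm.mem hu) (hc.symm.splt_of_lt h (by omega) hu hb)
    (hc.symm.splt_of_lt h one_pos ht hu)

theorem exists_penultimate (h : OneNestedCompatible 𝒮) (hc : IsReticulationCycle 𝒮 P P') :
    ∃ S S' H : Set X, P[P.length - 2]? = some (S, H) ∧ P'[P'.length - 2]? = some (S', H) ∧
      S ∩ S' = ∅ ∧ H ≠ ∅ ∧ P.getLast? = some (H, ∅) := by
  have hlen := hc.three_le_length h
  have hlen' := hc.symm.three_le_length h
  obtain ⟨a, ha⟩ : ∃ a, P[P.length - 2]? = some a :=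
    ⟨_, List.getElem?_eq_getElem (by omega)⟩
  obtain ⟨a', ha'⟩ : ∃ a', P'[P'.length - 2]? = some a' :=
    ⟨_, List.getElem?_eq_getElem (by omega)⟩
  obtain ⟨b, hb⟩ : ∃ b, P[P.length - 1]? = some b :=
    ⟨_, List.getElem?_eq_getElem (by omega)⟩
  have hb' : P'[P'.length - 1]? = some b := by
    rw [← List.getLast?_eq_getElem?, ← hc.getLast?_eq, List.getLast?_eq_getElem?, hb]
  have hcov : SPCovers 𝒮 a b :=
    hc.covers ha (by rwa [show P.length - 2 + 1 = P.length - 1 by omega])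
  have hcov' : SPCovers 𝒮 a' b :=
    hc.symm.covers ha' (by rwa [show P'.length - 2 + 1 = P'.length - 1 by omega])
  have hne : a ≠ a' := fun e => hc.notMem_right h (by omega) (by omega) ha
    (e ▸ List.mem_of_getElem? ha')
  obtain ⟨hdisj, h2, hH, rfl⟩ := hcov.eq_snd_empty_of_ne h hcov' hne
  exact ⟨a.1, a'.1, a.2, ha, h2 ▸ ha', hdisj, hH, by rwa [List.getLast?_eq_getElem?]⟩

theorem splt_of_snd_ne (h : OneNestedCompatible 𝒮) (hc : IsReticulationCycle 𝒮 P P')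
    (hH : H ≠ ∅) (hi : 1 ≤ i) (hu : P[i]? = some u) (hu2 : u.2 ≠ H)
    (hv : P[i + 1]? = some v) (hv2 : v.2 = H) {w w' : Set X × Set X}
    (hw' : P'[k]? = some w') (hw : P'[k + 1]? = some w) (hw2 : w.2 = H) : splt w' u := by
  have hwu : splt w u := (hc.covers hu hv).splt_of_snd_eq h (hv2 ▸ hH) (hv2 ▸ hu2)
    (hc.symm.mem hw) (hw2.trans hv2.symm)
  rcases (hc.symm.covers hw' hw).eq_or_splt_of_splt h (hw2 ▸ hH) (hc.mem hu) hwu with rfl | hlt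
  · exact absurd (List.mem_of_getElem? hw')
      (hc.notMem_right h hi (List.getElem?_eq_some_iff.1 hv).1 hu)
  · exact hlt

theorem interior_snd_eq (h : OneNestedCompatible 𝒮) (hc : IsReticulationCycle 𝒮 P P')
    (hH : H ≠ ∅) (ha : P[P.length - 2]? = some (S, H)) (ha' : P'[P'.length - 2]? = some (S', H))
    (hi : 1 ≤ i) (hi' : i + 1 < P.length) (hp : P[i]? = some p) : p.2 = H := by
  have hlen := hc.three_le_length h
  have hlen' := hc.symm.three_le_length h
  -- `u := P[k]` sits right above the maximal run of elements with second component `H` that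
  -- ends at the penultimate element; likewise `u' := P'[k']`.
  obtain ⟨k, hk, hrun, htop⟩ := Nat.exists_lt_forall_Ioc
    (Q := fun j => ∀ q, P[j]? = some q → q.2 = H)
    (m := P.length - 2) (by omega) (fun q hq => by rw [ha] at hq; cases hq; rfl)
  obtain ⟨k', hk', hrun', htop'⟩ := Nat.exists_lt_forall_Ioc
    (Q := fun j => ∀ q, P'[j]? = some q → q.2 = H)
    (m := P'.length - 2) (by omega) (fun q hq => by rw [ha'] at hq; cases hq; rfl)
  suffices k = 0 from hrun i (by omega) (by omega) p hp
  by_contra hk0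
  obtain ⟨u, hu, hu2⟩ : ∃ u, P[k]? = some u ∧ u.2 ≠ H := by
    simpa using htop.resolve_left hk0
  obtain ⟨v, hv⟩ : ∃ v, P[k + 1]? = some v := ⟨_, List.getElem?_eq_getElem (by omega)⟩
  obtain ⟨u', hu'⟩ : ∃ u', P'[k']? = some u' := ⟨_, List.getElem?_eq_getElem (by omega)⟩
  obtain ⟨v', hv'⟩ : ∃ v', P'[k' + 1]? = some v' := ⟨_, List.getElem?_eq_getElem (by omega)⟩
  have hv2 := hrun (k + 1) (by omega) (by omega) v hv
  have hv'2 := hrun' (k' + 1) (by omega) (by omega) v' hv'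
  have hu'u : splt u' u := hc.splt_of_snd_ne h hH (by omega) hu hu2 hv hv2 hu' hv' hv'2
  have hpair := h.isSetPair (hc.mem hu)
  have hpair' := h.isSetPair (hc.symm.mem hu')
  by_cases hk'0 : k' = 0
  · subst hk'0
    have hu'0 : P[0]? = some u' := by
      rwa [← List.head?_eq_getElem?, hc.head?_eq, List.head?_eq_getElem?]
    exact hu'u.asymm hpair' hpair (hc.splt_of_lt h (by omega) hu'0 hu)
  · obtain ⟨u'', hu'', hu''2⟩ : ∃ u'', P'[k']? = some u'' ∧ u''.2 ≠ H := by
      simpa using htop'.resolve_left hk'0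
    rw [hu'] at hu''
    cases hu''
    exact hu'u.asymm hpair' hpair
      (hc.symm.splt_of_snd_ne h hH (by omega) hu' hu''2 hv' hv'2 hu hv hv2)

/-- Otherwise `P[1]`, `P'[1]` and the common head would violate (NC5). -/
theorem head_snd_ne (h : OneNestedCompatible 𝒮) (hc : IsReticulationCycle 𝒮 P P')
    (hlen : 2 < P.length) {u' : Set X × Set X} (ht : P[0]? = some t) (hu : P[1]? = some u)
    (hu' : P'[1]? = some u') (hu2 : u.2 = H) (hu'2 : u'.2 = H) (hH : H ≠ ∅) : t.2 ≠ H := by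
  intro ht2
  have ht' : P'[0]? = some t := by
    rwa [← List.head?_eq_getElem?, ← hc.head?_eq, List.head?_eq_getElem?]
  have hcov := hc.covers ht hu
  have hcov' := hc.symm.covers ht' hu'
  have hne : u ≠ u' := fun e => hc.notMem_right h le_rfl hlen hu (e ▸ List.mem_of_getElem? hu')
  have hsub := hcov.2.2.1.fst_ssubset_of_snd_eq (h.isSetPair hcov.2.1) (h.isSetPair hcov.1)
    (hu2.trans ht2.symm) (ht2 ▸ hH)
  have hsub' := hcov'.2.2.1.fst_ssubset_of_snd_eq (h.isSetPair hcov'.2.1) (h.isSetPair hcov'.1)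
    (hu'2.trans ht2.symm) (ht2 ▸ hH)
  exact h.2.2.2.2.2 ⟨u, hcov.2.1, u', hcov'.2.1, t, hcov.1, hu2.trans hu'2.symm,
    hu'2.trans ht2.symm, hu2 ▸ hH, hcov.fst_inter_eq_empty h hcov' hne (hu2.trans hu'2.symm)
    (hu2 ▸ hH), Or.inl (union_subset hsub.subset hsub'.subset)⟩

theorem isSPPath (h : OneNestedCompatible 𝒮) (hc : IsReticulationCycle 𝒮 P P') (hH : H ≠ ∅)
    (ha : P[P.length - 2]? = some (S, H)) (ha' : P'[P'.length - 2]? = some (S', H))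
    (hlast : P.getLast? = some (H, ∅)) : IsSPPath 𝒮 S H P := by
  have hlen := hc.three_le_length h
  have hlen' := hc.symm.three_le_length h
  obtain ⟨t, ht⟩ : ∃ t, P[0]? = some t := ⟨_, List.getElem?_eq_getElem (by omega)⟩
  obtain ⟨u, hu⟩ : ∃ u, P[1]? = some u := ⟨_, List.getElem?_eq_getElem (by omega)⟩
  obtain ⟨u', hu'⟩ : ∃ u', P'[1]? = some u' := ⟨_, List.getElem?_eq_getElem (by omega)⟩
  have hu2 := hc.interior_snd_eq h hH ha ha' le_rfl (by omega) hu
  have ht2 := hc.head_snd_ne h (by omega) ht hu hu'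
    hu2 (hc.symm.interior_snd_eq h hH ha' ha le_rfl (by omega) hu') hH
  have hHt : H ⊆ t.1 := hu2 ▸ subset_union_right.trans
    ((hc.covers ht hu).support_subset_fst h (hu2 ▸ hH) (hu2 ▸ ht2))
  have hSt : splt (S, H) t := hc.splt_of_lt h (by omega) ht ha
  refine ⟨hlen, hc.isDirPath_left.2.1, hlast,
    fun i q hi hi' hq => hc.interior_snd_eq h hH ha ha' hi hi' hq,
    ⟨P.length - 2, by omega, by omega, ha⟩, t, by rwa [List.head?_eq_getElem?], ?_, ht2⟩
  obtain ⟨-, hsub | hsub | ⟨-, h2, -⟩⟩ := hSt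
  · exact hsub
  · refine absurd (subset_empty_iff.1 ?_) hH
    rw [← (h.isSetPair (hc.mem ht)).2]
    exact subset_inter hHt (subset_union_right.trans hsub)
  · exact absurd h2.symm ht2

end IsReticulationCycle

namespace IsSPPath

variable {L L' : List (Set X × Set X)} {S S' H H' : Set X} {x : (Set X × Set X) × (Set X × Set X)}

theorem snd_eq_of_mem_zip_tail (hL : IsSPPath 𝒮 S H L) (hx : x ∈ L.zip L.tail) :
    x.2.2 = H ∨ x.2 = (H, ∅) := by
  obtain ⟨k, -, hk⟩ := List.exists_getElem?_of_mem_zip_tail hx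
  have hk' := (List.getElem?_eq_some_iff.1 hk).1
  by_cases hint : k + 2 < L.length
  · exact Or.inl (hL.2.2.2.1 (k + 1) x.2 le_add_self hint hk)
  · have hlast := hL.2.2.1
    rw [List.getLast?_eq_getElem?, show L.length - 1 = k + 1 by omega, hk] at hlast
    exact Or.inr (Option.some.inj hlast)

theorem notMem_zip_tail (hL : IsSPPath 𝒮 S H L) (hL' : IsSPPath 𝒮 S' H' L') (hH : H ≠ ∅)
    (hH' : H' ≠ ∅) (hne : H ≠ H') (hx : x ∈ L.zip L.tail) : x ∉ L'.zip L'.tail := by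
  intro hx'
  rcases hL.snd_eq_of_mem_zip_tail hx with h1 | h1 <;>
    rcases hL'.snd_eq_of_mem_zip_tail hx' with h2 | h2 <;>
    simp_all [Prod.ext_iff]

end IsSPPath

theorem reticulation_cycle_structure_general {X : Type*}
    (𝒮 : Set (Set X × Set X)) (h : OneNestedCompatible 𝒮)
    (P P' : List (Set X × Set X))
    (hP : IsDirPath 𝒮 P) (hP' : IsDirPath 𝒮 P') (hne : P ≠ P')
    (hhead : P.head? = P'.head?) (hlast : P.getLast? = P'.getLast?)
    (hcommon : ∀ p : Set X × Set X, p ∈ P → p ∈ P' →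
      P.head? = some p ∨ P.getLast? = some p) :
    ∃ S S' H : Set X,
      ((S, H) : Set X × Set X) ∈ 𝒮 ∧ ((S', H) : Set X × Set X) ∈ 𝒮 ∧
      H ≠ ∅ ∧ S ∩ S' = ∅ ∧
      ((IsSPPath 𝒮 S H P ∧ IsSPPath 𝒮 S' H P') ∨
        (IsSPPath 𝒮 S H P' ∧ IsSPPath 𝒮 S' H P)) ∧
      P.getLast? = some ((H, (∅ : Set X)) : Set X × Set X) ∧
      (∀ S'' H'' : Set X, ((S'', H'') : Set X × Set X) ∈ 𝒮 → H'' ≠ ∅ → H'' ≠ H →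
        ∀ L'' : List (Set X × Set X), IsSPPath 𝒮 S'' H'' L'' →
          ∀ a : (Set X × Set X) × (Set X × Set X),
            a ∈ L''.zip L''.tail → a ∉ P.zip P.tail ∧ a ∉ P'.zip P'.tail) := by
  have hc : IsReticulationCycle 𝒮 P P' := ⟨hP, hP', hne, hhead, hlast, hcommon⟩
  obtain ⟨S, S', H, ha, ha', hdisj, hH, hb⟩ := hc.exists_penultimate h
  have hPath := hc.isSPPath h hH ha ha' hb
  have hPath' := hc.symm.isSPPath h hH ha' ha (hlast ▸ hb)
  refine ⟨S, S', H, hc.mem ha, hc.symm.mem ha', hH, hdisj, Or.inl ⟨hPath, hPath'⟩, hb, ?_⟩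
  intro S'' H'' _ hH'' hH''H L'' hL'' a ha
  exact ⟨hL''.notMem_zip_tail hPath hH'' hH hH''H ha, hL''.notMem_zip_tail hPath' hH'' hH hH''H ha⟩

/-- If `P` and `P'` form a reticulation cycle in `D(𝒮)` for a 1-nested compatible
`𝒮`, then there are `(S,H), (S',H) ∈ 𝒮` with `H ≠ ∅` and `S ∩ S' = ∅` such that
`{P,P'} = {P(S,H), P(S',H)}`; in particular the common last element is `(H,∅)`. Moreover, for
every `(S'',H'') ∈ 𝒮` with `H'' ≠ ∅`, `H'' ≠ H`, the path `P(S'',H'')` has no arc in common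
with `P` or `P'`. -/
theorem reticulation_cycle_structure {X : Type*} [Fintype X] [Nonempty X]
    (𝒮 : Set (Set X × Set X)) (h : OneNestedCompatible 𝒮)
    (P P' : List (Set X × Set X))
    (hP : IsDirPath 𝒮 P) (hP' : IsDirPath 𝒮 P') (hne : P ≠ P')
    (hhead : P.head? = P'.head?) (hlast : P.getLast? = P'.getLast?)
    (hcommon : ∀ p : Set X × Set X, p ∈ P → p ∈ P' →
      P.head? = some p ∨ P.getLast? = some p) :
    ∃ S S' H : Set X,
      ((S, H) : Set X × Set X) ∈ 𝒮 ∧ ((S', H) : Set X × Set X) ∈ 𝒮 ∧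
      H ≠ ∅ ∧ S ∩ S' = ∅ ∧
      ((IsSPPath 𝒮 S H P ∧ IsSPPath 𝒮 S' H P') ∨
        (IsSPPath 𝒮 S H P' ∧ IsSPPath 𝒮 S' H P)) ∧
      P.getLast? = some ((H, (∅ : Set X)) : Set X × Set X) ∧
      (∀ S'' H'' : Set X, ((S'', H'') : Set X × Set X) ∈ 𝒮 → H'' ≠ ∅ → H'' ≠ H →
        ∀ L'' : List (Set X × Set X), IsSPPath 𝒮 S'' H'' L'' →
          ∀ a : (Set X × Set X) × (Set X × Set X),
            a ∈ L''.zip L''.tail → a ∉ P.zip P.tail ∧ a ∉ P'.zip P'.tail) :=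
  reticulation_cycle_structure_general 𝒮 h P P' hP hP' hne hhead hlast hcommon
end

section
/- Let 𝒮 be a 1-nested compatible set pair system on X and suppose (S',H') ∈ 𝒮 covers exactly one element of 𝒮 in the partial order (𝒮,≤), say the set pair (S,H). Then H ≠ ∅, H' = ∅, and S' = S ∪ H. -/
open Set

variable {X : Type*}

/-!
Every `x ∈ S' ∪ H'` lies in the support of some child of `(S',H')`: start from `({x},∅) < (S',H')`
and climb to a maximal pair below `(S',H')` whose support still contains `x`. With a unique child
this gives `S' ∪ H' = S ∪ H`, and a step `(S,H) < (S',H')` that does not enlarge the support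
can only be `(S,H) < (S ∪ H, ∅)` with `H ≠ ∅`.
-/

lemma IsSetPair.snd_eq_empty_of_subset {p : Set X × Set X} (hp : IsSetPair p)
    (h : p.2 ⊆ p.1) : p.2 = ∅ :=
  subset_empty_iff.1 (hp.2 ▸ subset_inter h subset_rfl)

lemma IsSetPair.not_fst_subset_snd {p : Set X × Set X} (hp : IsSetPair p) : ¬ p.1 ⊆ p.2 :=
  fun h => hp.1 (subset_empty_iff.1 (hp.2 ▸ subset_inter subset_rfl h))

lemma union_subset_union_of_splt {p q : Set X × Set X} (h : splt p q) :
    p.1 ∪ p.2 ⊆ q.1 ∪ q.2 := by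
  rcases h.2 with ha | hb | ⟨hss, h2, -⟩
  · exact ha.trans subset_union_left
  · exact hb.trans subset_union_right
  · exact union_subset_union hss.subset h2.le

lemma eq_union_of_splt_of_union_eq {p q : Set X × Set X} (hp : IsSetPair p) (hq : IsSetPair q)
    (h : splt p q) (heq : p.1 ∪ p.2 = q.1 ∪ q.2) :
    q.2 = ∅ ∧ q.1 = p.1 ∪ p.2 ∧ p.2 ≠ ∅ := by
  obtain ⟨hne, ha | hb | ⟨hss, h2, -⟩⟩ := h
  · have hq₂ : q.2 = ∅ := hq.snd_eq_empty_of_subset (subset_union_right.trans (heq ▸ ha))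
    have hq₁ : q.1 = p.1 ∪ p.2 := by rw [heq, hq₂, union_empty]
    refine ⟨hq₂, hq₁, fun hp₂ => hne (Prod.ext ?_ (hp₂.trans hq₂.symm))⟩
    rw [hq₁, hp₂, union_empty]
  · exact absurd (subset_union_left.trans (heq ▸ hb)) hq.not_fst_subset_snd
  · refine absurd ?_ hss.ne
    rw [← union_sdiff_cancel_right hp.2.subset, ← union_sdiff_cancel_right hq.2.subset, ← h2,
      heq, h2]

lemma toLex_lt_of_splt {p q : Set X × Set X} (hp : IsSetPair p) (hq : IsSetPair q)
    (h : splt p q) : toLex (p.1 ∪ p.2, p.1) < toLex (q.1 ∪ q.2, q.1) := by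
  refine Prod.Lex.toLex_lt_toLex'.2 ⟨union_subset_union_of_splt h, fun heq => ?_⟩
  obtain ⟨-, hq₁, hp₂⟩ := eq_union_of_splt_of_union_eq hp hq h heq
  show p.1 ⊂ q.1
  rw [hq₁]
  exact ssubset_of_subset_of_ne subset_union_left fun hp₁ =>
    hp₂ (hp.snd_eq_empty_of_subset (union_eq_left.1 hp₁.symm))

lemma not_splt_singleton {p : Set X × Set X} (hp : IsSetPair p) (x : X) :
    ¬ splt p ({x}, ∅) := by
  rintro ⟨hne, ha | hb | ⟨-, -, hc⟩⟩
  · have hp₁ : p.1 = {x} :=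
      (subset_singleton_iff_eq.1 (subset_union_left.trans ha)).resolve_left hp.1
    exact hne (Prod.ext hp₁
      (hp.snd_eq_empty_of_subset (hp₁ ▸ subset_union_right.trans ha)))
  · exact hp.1 (subset_empty_iff.1 (subset_union_left.trans hb))
  · exact hc rfl

/-- `(S ∪ H, S)` increases lexicographically along `<`, so a candidate maximising it is a child. -/
lemma exists_covers_union_subset [Finite X] {𝒮 : Set (Set X × Set X)} (hsps : IsSPS 𝒮)
    {p r : Set X × Set X} (hp : p ∈ 𝒮) (hr : r ∈ 𝒮) (hrp : splt r p) :
    ∃ q, SPCovers 𝒮 p q ∧ r.1 ∪ r.2 ⊆ q.1 ∪ q.2 := by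
  let T := {q | q ∈ 𝒮 ∧ r.1 ∪ r.2 ⊆ q.1 ∪ q.2 ∧ splt q p}
  obtain ⟨q, ⟨hq, hrq, hqp⟩, hmax⟩ := (toFinite T).exists_maximalFor
    (fun q => toLex (q.1 ∪ q.2, q.1)) T ⟨r, hr, subset_rfl, hrp⟩
  refine ⟨q, ⟨hp, hq, hqp, ?_⟩, hrq⟩
  rintro ⟨s, hs, hqs, hsp⟩
  have hlt := toLex_lt_of_splt (hsps q hq) (hsps s hs) hqs
  exact hlt.not_ge (hmax ⟨hs, hrq.trans (union_subset_union_of_splt hqs), hsp⟩ hlt.le)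

lemma union_eq_of_forall_covers_eq [Finite X] {𝒮 : Set (Set X × Set X)} (hsps : IsSPS 𝒮)
    (hsingleton : ∀ x : X, (({x} : Set X), (∅ : Set X)) ∈ 𝒮) {p q : Set X × Set X}
    (hcov : SPCovers 𝒮 p q) (huniq : ∀ r, SPCovers 𝒮 p r → r = q) :
    q.1 ∪ q.2 = p.1 ∪ p.2 := by
  refine (union_subset_union_of_splt hcov.2.2.1).antisymm fun x hx => ?_
  have hxp : splt ({x}, ∅) p := by
    refine ⟨fun hpx => not_splt_singleton (hsps q hcov.2.1) x (hpx ▸ hcov.2.2.1), ?_⟩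
    rcases hx with hx | hx
    · exact Or.inl (by simpa using hx)
    · exact Or.inr (Or.inl (by simpa using hx))
  obtain ⟨r, hpr, hxr⟩ := exists_covers_union_subset hsps hcov.1 (hsingleton x) hxp
  exact huniq r hpr ▸ hxr (by simp)

theorem unique_child_structure_general {X : Type*} [Fintype X]
    (𝒮 : Set (Set X × Set X)) (h : OneNestedCompatible 𝒮)
    (S' H' S H : Set X)
    (hcov : SPCovers 𝒮 ((S', H') : Set X × Set X) (S, H))
    (huniq : ∀ q : Set X × Set X, SPCovers 𝒮 ((S', H') : Set X × Set X) q → q = (S, H)) :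
    H ≠ ∅ ∧ H' = ∅ ∧ S' = S ∪ H := by
  obtain ⟨hsps, -, hsingleton, -⟩ := h
  have hunion := union_eq_of_forall_covers_eq hsps hsingleton hcov huniq
  obtain ⟨hH', hS', hH⟩ :=
    eq_union_of_splt_of_union_eq (hsps _ hcov.2.1) (hsps _ hcov.1) hcov.2.2.1 hunion
  exact ⟨hH, hH', hS'⟩

/-- If `𝒮` is 1-nested compatible and `(S',H') ∈ 𝒮` covers exactly one element
`(S,H)` of `𝒮`, then `H ≠ ∅`, `H' = ∅` and `S' = S ∪ H`. -/
theorem unique_child_structure {X : Type*} [Fintype X] [Nonempty X]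
    (𝒮 : Set (Set X × Set X)) (h : OneNestedCompatible 𝒮)
    (S' H' S H : Set X)
    (hcov : SPCovers 𝒮 ((S', H') : Set X × Set X) (S, H))
    (huniq : ∀ q : Set X × Set X, SPCovers 𝒮 ((S', H') : Set X × Set X) q → q = (S, H)) :
    H ≠ ∅ ∧ H' = ∅ ∧ S' = S ∪ H :=
  unique_child_structure_general 𝒮 h S' H' S H hcov huniq
end

section
/- If 𝒮 is a 1-nested compatible set pair system on a set X with |X| = n, then |𝒮| ≤ 3n − 2. -/
open Set

variable {X : Type*}

/-!
Split `𝒮` according to whether `H = ∅`. The sets `S` with `(S, ∅) ∈ 𝒮` form a laminar family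
of nonempty sets: at most `n` singletons, and at most `n - 1` larger members, because contracting
a minimal larger member to a point removes one member and at least one point.

Among the pairs with `H ≠ ∅`, pick a class `{(S, H)}` whose region `⋃ S ∪ H` is smallest. By
(NC5) its sets `S` form two chains with disjoint unions, so the class has at most
`|⋃ S| ≤ |region| - 1` members. By minimality every other pair contains the region in one
component or avoids it, so contracting the region to a point gives a system of the same kind on
`n - |region| + 1` points, and induction bounds these pairs by `n - 1`.
-/

section Saturated

variable {α β : Type*} {f : α → β} {s t : Set α}

theorem image_subset_image_iff_of_preimage_image_eq (ht : f ⁻¹' (f '' t) = t) :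
    f '' s ⊆ f '' t ↔ s ⊆ t := by
  rw [image_subset_iff, ht]

theorem disjoint_image_image_iff_of_preimage_image_eq (ht : f ⁻¹' (f '' t) = t) :
    Disjoint (f '' s) (f '' t) ↔ Disjoint s t := by
  rw [disjoint_image_left, ht]

theorem eq_of_image_eq_of_preimage_image_eq (hs : f ⁻¹' (f '' s) = s)
    (ht : f ⁻¹' (f '' t) = t) (h : f '' s = f '' t) : s = t := by
  rw [← hs, ← ht, h]

theorem preimage_image_union_eq (hs : f ⁻¹' (f '' s) = s) (ht : f ⁻¹' (f '' t) = t) :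
    f ⁻¹' (f '' (s ∪ t)) = s ∪ t := by
  rw [image_union, preimage_union, hs, ht]

end Saturated

section Contract

variable {R T : Set X} {x₀ y : X}

open Classical in
noncomputable def contract (R : Set X) (x₀ y : X) : X :=
  if y ∈ R then x₀ else y

theorem contract_of_mem (hy : y ∈ R) : contract R x₀ y = x₀ := if_pos hy

theorem contract_of_notMem (hy : y ∉ R) : contract R x₀ y = y := if_neg hy

theorem contract_image_of_disjoint (h : Disjoint R T) : contract R x₀ '' T = T := by
  have : EqOn (contract R x₀) id T := fun y hy => contract_of_notMem (h.notMem_of_mem_right hy)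
  rw [this.image_eq, image_id]

theorem contract_image_of_subset (hx₀ : x₀ ∈ R) (h : R ⊆ T) :
    contract R x₀ '' T = insert x₀ (T \ R) := by
  ext y
  constructor
  · rintro ⟨t, ht, rfl⟩
    by_cases htR : t ∈ R
    · rw [contract_of_mem htR]
      exact mem_insert _ _
    · rw [contract_of_notMem htR]
      exact Or.inr ⟨ht, htR⟩
  · rintro (rfl | ⟨hy, hyR⟩)
    · exact ⟨y, h hx₀, contract_of_mem hx₀⟩
    · exact ⟨y, hy, contract_of_notMem hyR⟩

theorem preimage_contract_image (hx₀ : x₀ ∈ R) (hT : R ⊆ T ∨ Disjoint R T) :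
    contract R x₀ ⁻¹' (contract R x₀ '' T) = T := by
  ext y
  by_cases hy : y ∈ R
  · rcases hT with h | h
    · simp [contract_of_mem hy, contract_image_of_subset hx₀ h, h hy]
    · simp [contract_of_mem hy, contract_image_of_disjoint h, h.notMem_of_mem_left hy,
        h.notMem_of_mem_left hx₀]
  · rcases hT with h | h
    · simp [contract_of_notMem hy, contract_image_of_subset hx₀ h, hy,
        (ne_of_mem_of_not_mem hx₀ hy).symm]
    · simp [contract_of_notMem hy, contract_image_of_disjoint h]

theorem ncard_contract_image_add_ncard [Finite X] (hx₀ : x₀ ∈ R) (h : R ⊆ T) :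
    (contract R x₀ '' T).ncard + R.ncard = T.ncard + 1 := by
  rw [contract_image_of_subset hx₀ h, ncard_insert_of_notMem fun hx => hx.2 hx₀,
    ← ncard_sdiff_add_ncard_of_subset h]
  ring

end Contract

section Laminar

variable {α β : Type*}

def IsLaminar (𝒯 : Set (Set α)) : Prop :=
  ∀ T₁ ∈ 𝒯, ∀ T₂ ∈ 𝒯, T₁ ⊆ T₂ ∨ T₂ ⊆ T₁ ∨ Disjoint T₁ T₂

theorem IsLaminar.mono {𝒯 𝒯' : Set (Set α)} (h𝒯 : IsLaminar 𝒯) (h : 𝒯' ⊆ 𝒯) :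
    IsLaminar 𝒯' :=
  fun T₁ h₁ T₂ h₂ => h𝒯 T₁ (h h₁) T₂ (h h₂)

theorem IsLaminar.image {𝒯 : Set (Set α)} (h𝒯 : IsLaminar 𝒯) {f : α → β}
    (hf : ∀ T ∈ 𝒯, f ⁻¹' (f '' T) = T) : IsLaminar (image f '' 𝒯) := by
  rintro _ ⟨T₁, h₁, rfl⟩ _ ⟨T₂, h₂, rfl⟩
  rcases h𝒯 T₁ h₁ T₂ h₂ with h | h | h
  · exact Or.inl (image_mono h)
  · exact Or.inr (Or.inl (image_mono h))
  · exact Or.inr (Or.inr ((disjoint_image_image_iff_of_preimage_image_eq (hf T₂ h₂)).2 h))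

theorem IsLaminar.ncard_le [Finite α] {𝒯 : Set (Set α)} {A : Set α} (h𝒯 : IsLaminar 𝒯)
    (hA : ∀ T ∈ 𝒯, T ⊆ A) (htwo : ∀ T ∈ 𝒯, 1 < T.ncard) : 𝒯.ncard ≤ A.ncard - 1 := by
  induction hk : A.ncard using Nat.strong_induction_on generalizing 𝒯 A with
  | _ k ih =>
  obtain rfl | h𝒯ne := 𝒯.eq_empty_or_nonempty
  · simp
  obtain ⟨S₀, hS₀, hmin⟩ := exists_min_image 𝒯 ncard 𝒯.toFinite h𝒯ne
  have hS₀two := htwo S₀ hS₀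
  obtain ⟨x₀, hx₀⟩ : S₀.Nonempty := nonempty_of_ncard_ne_zero hS₀two.ne_bot
  set f := contract S₀ x₀
  have hrest : ∀ T ∈ 𝒯 \ {S₀}, S₀ ⊂ T ∨ Disjoint S₀ T := by
    rintro T ⟨hT, hTS₀ : T ≠ S₀⟩
    rcases h𝒯 T hT S₀ hS₀ with h | h | h
    · exact absurd (eq_of_subset_of_ncard_le h (hmin T hT)) hTS₀
    · exact Or.inl (h.ssubset_of_ne hTS₀.symm)
    · exact Or.inr h.symm
  have hsat : ∀ T ∈ 𝒯 \ {S₀}, f ⁻¹' (f '' T) = T := fun T hT =>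
    preimage_contract_image hx₀ ((hrest T hT).imp_left subset_of_ssubset)
  have hcard : (Set.image f '' (𝒯 \ {S₀})).ncard + 1 = 𝒯.ncard := by
    rw [InjOn.ncard_image fun T₁ h₁ T₂ h₂ => eq_of_image_eq_of_preimage_image_eq
      (hsat T₁ h₁) (hsat T₂ h₂), ncard_sdiff_singleton_add_one hS₀]
  have htwo' : ∀ T ∈ 𝒯 \ {S₀}, 1 < (f '' T).ncard := by
    intro T hT
    rcases hrest T hT with h | h
    · have : (f '' T).ncard + S₀.ncard = T.ncard + 1 :=
        ncard_contract_image_add_ncard hx₀ h.subset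
      have := ncard_lt_ncard h
      omega
    · rw [contract_image_of_disjoint h]
      exact htwo T hT.1
  have hA' : (f '' A).ncard + S₀.ncard = A.ncard + 1 :=
    ncard_contract_image_add_ncard hx₀ (hA S₀ hS₀)
  have hIH := ih _ (by omega) ((h𝒯.mono sdiff_subset).image hsat)
    (forall_mem_image.2 fun T hT => image_mono (hA T hT.1)) (forall_mem_image.2 htwo') rfl
  have := ncard_le_ncard (hA S₀ hS₀)
  omega

theorem IsLaminar.ncard_le_two_mul [Finite α] {𝒯 : Set (Set α)} {A : Set α} (h𝒯 : IsLaminar 𝒯)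
    (hA : ∀ T ∈ 𝒯, T ⊆ A) (hne : ∀ T ∈ 𝒯, T.Nonempty) : 𝒯.ncard ≤ 2 * A.ncard - 1 := by
  have hsmall : (𝒯 ∩ {T | T.ncard ≤ 1}).ncard ≤ A.ncard := by
    refine (ncard_le_ncard fun T hT => ?_).trans (ncard_image_le (f := singleton))
    obtain ⟨x, rfl⟩ := ncard_eq_one.1 (hT.2.antisymm ((ncard_pos).2 (hne T hT.1)))
    exact ⟨x, hA _ hT.1 rfl, rfl⟩
  have hbig : (𝒯 \ {T | T.ncard ≤ 1}).ncard ≤ A.ncard - 1 :=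
    (h𝒯.mono sdiff_subset).ncard_le (fun T hT => hA T hT.1) fun T hT => not_le.1 hT.2
  have := ncard_inter_add_ncard_sdiff_eq_ncard 𝒯 {T | T.ncard ≤ 1}
  omega

end Laminar

section Chains

variable {α : Type*} [Finite α] {𝒞 : Set (Set α)}

theorem ncard_le_ncard_sUnion_of_isChain (h𝒞 : IsChain (· ⊆ ·) 𝒞) (hne : ∀ T ∈ 𝒞, T.Nonempty) :
    𝒞.ncard ≤ (⋃₀ 𝒞).ncard := by
  have hinj : InjOn ncard 𝒞 := fun T₁ h₁ T₂ h₂ he => by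
    rcases h𝒞.total h₁ h₂ with h | h
    · exact eq_of_subset_of_ncard_le h he.ge
    · exact (eq_of_subset_of_ncard_le h he.le).symm
  calc 𝒞.ncard ≤ (Icc 1 (⋃₀ 𝒞).ncard).ncard :=
        ncard_le_ncard_of_injOn ncard (fun T hT =>
          ⟨(ncard_pos).2 (hne T hT), ncard_le_ncard (subset_sUnion_of_mem hT)⟩) hinj
    _ = (⋃₀ 𝒞).ncard := by simp

def SplitsDisjointUnions (𝒞 : Set (Set α)) : Prop :=
  ∀ T₁ ∈ 𝒞, ∀ T₂ ∈ 𝒞, ∀ T₃ ∈ 𝒞, Disjoint T₁ T₂ → ¬ T₁ ∪ T₂ ⊆ T₃ ∧ ¬ Disjoint (T₁ ∪ T₂) T₃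

theorem ncard_le_ncard_sUnion_of_splitsDisjointUnions (h𝒞 : IsLaminar 𝒞)
    (hsplit : SplitsDisjointUnions 𝒞) (hne : ∀ T ∈ 𝒞, T.Nonempty) :
    𝒞.ncard ≤ (⋃₀ 𝒞).ncard := by
  obtain rfl | h𝒞ne := 𝒞.eq_empty_or_nonempty
  · simp
  obtain ⟨M, hM, hmax⟩ := exists_max_image 𝒞 ncard 𝒞.toFinite h𝒞ne
  set C₁ := 𝒞 ∩ {T | T ⊆ M}
  set C₂ := 𝒞 \ {T | T ⊆ M}
  have hC₂ : ∀ T ∈ C₂, Disjoint T M := by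
    rintro T ⟨hT, hTM : ¬ T ⊆ M⟩
    rcases h𝒞 T hT M hM with h | h | h
    · exact absurd h hTM
    · exact absurd (eq_of_subset_of_ncard_le h (hmax T hT)).ge hTM
    · exact h
  have hchain₁ : IsChain (· ⊆ ·) C₁ := fun T₁ h₁ T₂ h₂ _ => by
    rcases h𝒞 T₁ h₁.1 T₂ h₂.1 with h | h | h
    · exact Or.inl h
    · exact Or.inr h
    · exact absurd (union_subset h₁.2 h₂.2) (hsplit T₁ h₁.1 T₂ h₂.1 M hM h).1
  have hchain₂ : IsChain (· ⊆ ·) C₂ := fun T₁ h₁ T₂ h₂ _ => by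
    rcases h𝒞 T₁ h₁.1 T₂ h₂.1 with h | h | h
    · exact Or.inl h
    · exact Or.inr h
    · exact absurd (disjoint_union_left.2 ⟨hC₂ T₁ h₁, hC₂ T₂ h₂⟩)
        (hsplit T₁ h₁.1 T₂ h₂.1 M hM h).2
  have hdisj : Disjoint (⋃₀ C₁) (⋃₀ C₂) :=
    ((disjoint_sUnion_left.2 hC₂).mono_right (sUnion_subset fun T hT => hT.2)).symm
  calc 𝒞.ncard = C₁.ncard + C₂.ncard := (ncard_inter_add_ncard_sdiff_eq_ncard _ _).symm
    _ ≤ (⋃₀ C₁).ncard + (⋃₀ C₂).ncard :=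
      add_le_add (ncard_le_ncard_sUnion_of_isChain hchain₁ fun T hT => hne T hT.1)
        (ncard_le_ncard_sUnion_of_isChain hchain₂ fun T hT => hne T hT.1)
    _ = (⋃₀ 𝒞).ncard := by rw [← ncard_union_eq hdisj, ← sUnion_union, inter_union_sdiff]

end Chains

section HeadedSystem

variable {α β : Type*} {A : Set α} {ℬ ℬ' : Set (Set α × Set α)} {p q : Set α × Set α}

def IsBelow (p q : Set α × Set α) : Prop :=
  p.1 ∪ p.2 ⊆ q.1 ∨ p.1 ∪ p.2 ⊆ q.2

/-- Conditions (NC4) and (NC5) on pairs `(S, H)` with `H ≠ ∅`, supported in `A`. -/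
structure IsHeadedSystem (A : Set α) (ℬ : Set (Set α × Set α)) : Prop where
  fst_nonempty : ∀ p ∈ ℬ, p.1.Nonempty
  snd_nonempty : ∀ p ∈ ℬ, p.2.Nonempty
  disjoint : ∀ p ∈ ℬ, Disjoint p.1 p.2
  subset : ∀ p ∈ ℬ, p.1 ∪ p.2 ⊆ A
  laminar : ∀ p ∈ ℬ, ∀ q ∈ ℬ, p.2 = q.2 → p.1 ⊆ q.1 ∨ q.1 ⊆ p.1 ∨ Disjoint p.1 q.1
  splits : ∀ p ∈ ℬ, ∀ q ∈ ℬ, ∀ r ∈ ℬ, p.2 = q.2 → q.2 = r.2 → Disjoint p.1 q.1 →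
    ¬ p.1 ∪ q.1 ⊆ r.1 ∧ ¬ Disjoint (p.1 ∪ q.1) r.1
  nested : ∀ p ∈ ℬ, ∀ q ∈ ℬ, p.2 ≠ q.2 →
    Disjoint (p.1 ∪ p.2) (q.1 ∪ q.2) ∨ IsBelow p q ∨ IsBelow q p

theorem ncard_inter_snd_eq (ℬ : Set (Set α × Set α)) (H : Set α) :
    (ℬ ∩ {q | q.2 = H}).ncard = {S | (S, H) ∈ ℬ}.ncard := by
  have : ℬ ∩ {q | q.2 = H} = (·, H) '' {S | (S, H) ∈ ℬ} := by
    ext ⟨S, K⟩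
    constructor
    · rintro ⟨h, rfl : K = H⟩
      exact ⟨S, h, rfl⟩
    · rintro ⟨S, h, he⟩
      cases he
      exact ⟨h, rfl⟩
  rw [this, ncard_image_of_injective _ (Prod.mk_left_injective _)]

def region (ℬ : Set (Set α × Set α)) (H : Set α) : Set α :=
  ⋃₀ {S | (S, H) ∈ ℬ} ∪ H

theorem IsHeadedSystem.mono (hℬ : IsHeadedSystem A ℬ) (h : ℬ' ⊆ ℬ) : IsHeadedSystem A ℬ' :=
  ⟨fun p hp => hℬ.fst_nonempty p (h hp), fun p hp => hℬ.snd_nonempty p (h hp),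
    fun p hp => hℬ.disjoint p (h hp), fun p hp => hℬ.subset p (h hp),
    fun p hp q hq => hℬ.laminar p (h hp) q (h hq),
    fun p hp q hq r hr => hℬ.splits p (h hp) q (h hq) r (h hr),
    fun p hp q hq => hℬ.nested p (h hp) q (h hq)⟩

theorem IsHeadedSystem.image (hℬ : IsHeadedSystem A ℬ) {f : α → β}
    (hf : ∀ p ∈ ℬ, f ⁻¹' (f '' p.1) = p.1 ∧ f ⁻¹' (f '' p.2) = p.2) :
    IsHeadedSystem (f '' A) (Prod.map (Set.image f) (Set.image f) '' ℬ) := by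
  have hsnd : ∀ p ∈ ℬ, ∀ q ∈ ℬ, f '' p.2 = f '' q.2 → p.2 = q.2 := fun p hp q hq =>
    eq_of_image_eq_of_preimage_image_eq (hf p hp).2 (hf q hq).2
  refine ⟨?_, ?_, ?_, ?_, ?_, ?_, ?_⟩
  · rintro _ ⟨p, hp, rfl⟩
    exact (hℬ.fst_nonempty p hp).image f
  · rintro _ ⟨p, hp, rfl⟩
    exact (hℬ.snd_nonempty p hp).image f
  · rintro _ ⟨p, hp, rfl⟩
    exact (disjoint_image_image_iff_of_preimage_image_eq (hf p hp).2).2 (hℬ.disjoint p hp)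
  · rintro _ ⟨p, hp, rfl⟩
    rw [Prod.map_fst, Prod.map_snd, ← image_union]
    exact image_mono (hℬ.subset p hp)
  · rintro _ ⟨p, hp, rfl⟩ _ ⟨q, hq, rfl⟩ he
    rcases hℬ.laminar p hp q hq (hsnd p hp q hq he) with h | h | h
    · exact Or.inl (image_mono h)
    · exact Or.inr (Or.inl (image_mono h))
    · exact Or.inr (Or.inr ((disjoint_image_image_iff_of_preimage_image_eq (hf q hq).1).2 h))
  · rintro _ ⟨p, hp, rfl⟩ _ ⟨q, hq, rfl⟩ _ ⟨r, hr, rfl⟩ hpq hqr hd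
    simp only [Prod.map_fst, Prod.map_snd] at hpq hqr hd ⊢
    rw [← image_union, image_subset_image_iff_of_preimage_image_eq (hf r hr).1,
      disjoint_image_image_iff_of_preimage_image_eq (hf r hr).1]
    exact hℬ.splits p hp q hq r hr (hsnd p hp q hq hpq) (hsnd q hq r hr hqr)
      ((disjoint_image_image_iff_of_preimage_image_eq (hf q hq).1).1 hd)
  · rintro _ ⟨p, hp, rfl⟩ _ ⟨q, hq, rfl⟩ hne
    simp only [IsBelow, Prod.map_fst, Prod.map_snd, ← image_union]
    rw [disjoint_image_image_iff_of_preimage_image_eq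
        (preimage_image_union_eq (hf q hq).1 (hf q hq).2),
      image_subset_image_iff_of_preimage_image_eq (hf q hq).1,
      image_subset_image_iff_of_preimage_image_eq (hf q hq).2,
      image_subset_image_iff_of_preimage_image_eq (hf p hp).1,
      image_subset_image_iff_of_preimage_image_eq (hf p hp).2]
    exact hℬ.nested p hp q hq fun h => hne (congrArg (Set.image f) h)

theorem IsHeadedSystem.subset_of_snd_subset (hℬ : IsHeadedSystem A ℬ) (hp : p ∈ ℬ) (hq : q ∈ ℬ)
    (hne : q.2 ≠ p.2) {T : Set α} (hT : T = p.1 ∨ T = p.2) (h : q.2 ⊆ T) : q.1 ∪ q.2 ⊆ T := by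
  have hS := hℬ.fst_nonempty p hp
  have hH := hℬ.snd_nonempty p hp
  have hK := hℬ.snd_nonempty q hq
  have hpd := hℬ.disjoint p hp
  have hqd := hℬ.disjoint q hq
  rcases hT with rfl | rfl <;> rcases hℬ.nested q hq p hp hne with h' | (h' | h') | (h' | h') <;>
    first
    | exact h'
    | (exfalso; apply hK.ne_empty; tauto_set)
    | (exfalso; apply hH.ne_empty; tauto_set)
    | (exfalso; apply hS.ne_empty; tauto_set)

theorem IsHeadedSystem.region_subset (hℬ : IsHeadedSystem A ℬ) (hp : p ∈ ℬ) {K T : Set α}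
    (hne : K ≠ p.2) (hT : T = p.1 ∨ T = p.2) (h : K ⊆ T) : region ℬ K ⊆ T :=
  union_subset (sUnion_subset fun _ hS =>
    subset_union_left.trans (hℬ.subset_of_snd_subset hp hS hne hT h)) h

theorem IsHeadedSystem.region_ssubset (hℬ : IsHeadedSystem A ℬ) (hp : p ∈ ℬ)
    (hne : q.2 ≠ p.2) (h : IsBelow q p) : region ℬ q.2 ⊂ region ℬ p.2 := by
  have h₁ : p.1 ⊆ region ℬ p.2 := (subset_sUnion_of_mem hp).trans subset_union_left
  have h₂ : p.2 ⊆ region ℬ p.2 := subset_union_right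
  have hS := hℬ.fst_nonempty p hp
  have hH := hℬ.snd_nonempty p hp
  have hpd := hℬ.disjoint p hp
  rcases h with h | h
  · exact (hℬ.region_subset hp hne (Or.inl rfl) (subset_union_right.trans h)).trans_ssubset
      ⟨h₁, fun h' => hH.ne_empty (by tauto_set)⟩
  · exact (hℬ.region_subset hp hne (Or.inr rfl) (subset_union_right.trans h)).trans_ssubset
      ⟨h₂, fun h' => hS.ne_empty (by tauto_set)⟩

theorem IsHeadedSystem.subset_or_disjoint_of_minimal (hℬ : IsHeadedSystem A ℬ) (hp : p ∈ ℬ)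
    (hmin : ∀ q ∈ ℬ, ¬ region ℬ q.2 ⊂ region ℬ p.2) (hq : q ∈ ℬ) (hne : q.2 ≠ p.2) :
    (region ℬ p.2 ⊆ q.1 ∨ Disjoint (region ℬ p.2) q.1) ∧
      (region ℬ p.2 ⊆ q.2 ∨ Disjoint (region ℬ p.2) q.2) := by
  have hcls : ∀ S, (S, p.2) ∈ ℬ → Disjoint (S ∪ p.2) (q.1 ∪ q.2) ∨ IsBelow (S, p.2) q :=
    fun S hS => (hℬ.nested _ hS q hq hne.symm).imp_right fun h =>
      h.resolve_right fun h' => hmin q hq (hℬ.region_ssubset (p := (S, p.2)) hS hne h')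
  have hH := hℬ.snd_nonempty p hp
  have hqd := hℬ.disjoint q hq
  -- the members of the class of `p.2` all contain `p.2`, so they lie on the same side of `q`
  have hside : ∀ T, (T = q.1 ∨ T = q.2 ∨ T = (q.1 ∪ q.2)ᶜ) → p.2 ⊆ T → region ℬ p.2 ⊆ T := by
    intro T hT hHT
    refine union_subset (sUnion_subset fun S hS => ?_) hHT
    rcases hcls S hS with h | h | h <;> rcases hT with rfl | rfl | rfl <;>
      first | tauto_set | (exfalso; apply hH.ne_empty; tauto_set)
  rcases hcls p.1 hp with h | h | h
  · have hR := subset_compl_iff_disjoint_right.1 (hside _ (by simp)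
      (subset_compl_iff_disjoint_right.2 (h.mono_left subset_union_right)))
    exact ⟨Or.inr (hR.mono_right subset_union_left), Or.inr (hR.mono_right subset_union_right)⟩
  · have hR := hside _ (by simp) (subset_union_right.trans h)
    exact ⟨Or.inl hR, Or.inr (hqd.mono_left hR)⟩
  · have hR := hside _ (by simp) (subset_union_right.trans h)
    exact ⟨Or.inr (hqd.symm.mono_left hR), Or.inl hR⟩

theorem IsHeadedSystem.ncard_class_add_one_le [Finite α] (hℬ : IsHeadedSystem A ℬ)
    (hp : p ∈ ℬ) :
    {S | (S, p.2) ∈ ℬ}.ncard + 1 ≤ (region ℬ p.2).ncard := by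
  set 𝒞 := {S | (S, p.2) ∈ ℬ}
  have h𝒞 : 𝒞.ncard ≤ (⋃₀ 𝒞).ncard :=
    ncard_le_ncard_sUnion_of_splitsDisjointUnions
      (fun _ h₁ _ h₂ => hℬ.laminar _ h₁ _ h₂ rfl)
      (fun _ h₁ _ h₂ _ h₃ => hℬ.splits _ h₁ _ h₂ _ h₃ rfl rfl)
      (fun _ h => hℬ.fst_nonempty _ h)
  have hdisj : Disjoint (⋃₀ 𝒞) p.2 := disjoint_sUnion_left.2 fun _ h => hℬ.disjoint _ h
  have hH := (ncard_pos (s := p.2)).2 (hℬ.snd_nonempty p hp)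
  rw [region, ncard_union_eq hdisj]
  omega

theorem IsHeadedSystem.ncard_le [Finite α] (hℬ : IsHeadedSystem A ℬ) :
    ℬ.ncard ≤ A.ncard - 1 := by
  induction hk : A.ncard using Nat.strong_induction_on generalizing A ℬ with
  | _ k ih =>
  obtain rfl | hℬne := ℬ.eq_empty_or_nonempty
  · simp
  obtain ⟨p, hp, hmin⟩ := exists_min_image ℬ (fun q => (region ℬ q.2).ncard) ℬ.toFinite hℬne
  obtain ⟨x₀, hx₀⟩ := hℬ.snd_nonempty p hp
  set R := region ℬ p.2
  set f := contract R x₀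
  set P : Set (Set α × Set α) := {q | q.2 = p.2}
  have hRA : R ⊆ A := union_subset
    (sUnion_subset fun _ h => subset_union_left.trans (hℬ.subset _ h))
    (subset_union_right.trans (hℬ.subset p hp))
  have hsat : ∀ q ∈ ℬ \ P, f ⁻¹' (f '' q.1) = q.1 ∧ f ⁻¹' (f '' q.2) = q.2 := by
    rintro q ⟨hq, hne : q.2 ≠ p.2⟩
    obtain ⟨h₁, h₂⟩ := hℬ.subset_or_disjoint_of_minimal hp
      (fun q hq h => (hmin q hq).not_gt (ncard_lt_ncard h)) hq hne
    exact ⟨preimage_contract_image (Or.inr hx₀) h₁, preimage_contract_image (Or.inr hx₀) h₂⟩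
  have hinj : InjOn (Prod.map (Set.image f) (Set.image f)) (ℬ \ P) := fun q₁ h₁ q₂ h₂ he =>
    Prod.ext
      (eq_of_image_eq_of_preimage_image_eq (hsat q₁ h₁).1 (hsat q₂ h₂).1 (congrArg Prod.fst he))
      (eq_of_image_eq_of_preimage_image_eq (hsat q₁ h₁).2 (hsat q₂ h₂).2 (congrArg Prod.snd he))
  have hC : (ℬ ∩ P).ncard + 1 ≤ R.ncard := by
    rw [ncard_inter_snd_eq]
    exact hℬ.ncard_class_add_one_le hp
  have hCpos : 0 < (ℬ ∩ P).ncard := (ncard_pos).2 ⟨p, hp, rfl⟩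
  have hA' : (f '' A).ncard + R.ncard = A.ncard + 1 :=
    ncard_contract_image_add_ncard (Or.inr hx₀) hRA
  have hrest : (ℬ \ P).ncard ≤ (f '' A).ncard - 1 := by
    rw [← hinj.ncard_image]
    exact ih _ (by omega) ((hℬ.mono sdiff_subset).image hsat) rfl
  have := ncard_inter_add_ncard_sdiff_eq_ncard ℬ P
  have := ncard_le_ncard hRA
  omega

end HeadedSystem

section OneNestedCompatible

variable {𝒮 : Set (Set X × Set X)} {p q : Set X × Set X}

theorem ExactlyOne4.or {a b c d : Prop} (h : ExactlyOne4 a b c d) : a ∨ b ∨ c ∨ d := by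
  rcases h with ⟨h, -⟩ | ⟨-, h, -⟩ | ⟨-, -, h, -⟩ | ⟨-, -, -, h⟩ <;> simp [h]

theorem isBelow_or_of_splt (h : splt p q) : IsBelow p q ∨ (p.1 ⊆ q.1 ∧ p.2 = q.2) := by
  rcases h.2 with h | h | h
  · exact Or.inl (Or.inl h)
  · exact Or.inl (Or.inr h)
  · exact Or.inr ⟨h.1.subset, h.2.1⟩

theorem OneNestedCompatible.disjoint_or_isBelow_or_snd_eq (h : OneNestedCompatible 𝒮) (hp : p ∈ 𝒮)
    (hq : q ∈ 𝒮) :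
    Disjoint (p.1 ∪ p.2) (q.1 ∪ q.2) ∨ IsBelow p q ∨ IsBelow q p ∨
      (p.2 = q.2 ∧ (p.1 ⊆ q.1 ∨ q.1 ⊆ p.1 ∨ Disjoint p.1 q.1)) := by
  obtain rfl | hpq := eq_or_ne p q
  · exact Or.inr (Or.inr (Or.inr ⟨rfl, Or.inl subset_rfl⟩))
  rcases (h.2.2.2.2.1 p hp q hq hpq).or with h | h | h | h
  · rcases isBelow_or_of_splt h with h | h
    · exact Or.inr (Or.inl h)
    · exact Or.inr (Or.inr (Or.inr ⟨h.2, Or.inl h.1⟩))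
  · rcases isBelow_or_of_splt h with h | h
    · exact Or.inr (Or.inr (Or.inl h))
    · exact Or.inr (Or.inr (Or.inr ⟨h.2.symm, Or.inr (Or.inl h.1)⟩))
  · exact Or.inl (disjoint_iff_inter_eq_empty.2 h)
  · exact Or.inr (Or.inr (Or.inr ⟨h.2.1, Or.inr (Or.inr (disjoint_iff_inter_eq_empty.2 h.1))⟩))

theorem OneNestedCompatible.laminar (h : OneNestedCompatible 𝒮) (hp : p ∈ 𝒮) (hq : q ∈ 𝒮)
    (he : p.2 = q.2) : p.1 ⊆ q.1 ∨ q.1 ⊆ p.1 ∨ Disjoint p.1 q.1 := by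
  obtain ⟨hpne, hpd⟩ := h.1 p hp
  obtain ⟨hqne, hqd⟩ := h.1 q hq
  rw [← nonempty_iff_ne_empty] at hpne hqne
  rcases h.disjoint_or_isBelow_or_snd_eq hp hq with h' | (h' | h') | (h' | h') | h'
  · exact Or.inr (Or.inr (h'.mono subset_union_left subset_union_left))
  · exact Or.inl (subset_union_left.trans h')
  · exact (hpne.ne_empty (by tauto_set)).elim
  · exact Or.inr (Or.inl (subset_union_left.trans h'))
  · exact (hqne.ne_empty (by tauto_set)).elim
  · exact h'.2

theorem OneNestedCompatible.isHeadedSystem (h : OneNestedCompatible 𝒮) :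
    IsHeadedSystem univ (𝒮 \ {p | p.2 = ∅}) where
  fst_nonempty p hp := nonempty_iff_ne_empty.2 (h.1 p hp.1).1
  snd_nonempty p hp := nonempty_iff_ne_empty.2 hp.2
  disjoint p hp := disjoint_iff_inter_eq_empty.2 (h.1 p hp.1).2
  subset _ _ := subset_univ _
  laminar p hp q hq := h.laminar hp.1 hq.1
  splits p hp q hq r hr hpq hqr hd :=
    ⟨fun hs => h.2.2.2.2.2 ⟨p, hp.1, q, hq.1, r, hr.1, hpq, hqr, hp.2,
        disjoint_iff_inter_eq_empty.1 hd, Or.inl hs⟩,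
      fun hs => h.2.2.2.2.2 ⟨p, hp.1, q, hq.1, r, hr.1, hpq, hqr, hp.2,
        disjoint_iff_inter_eq_empty.1 hd, Or.inr (disjoint_iff_inter_eq_empty.1 hs)⟩⟩
  nested p hp q hq hne := by
    rcases h.disjoint_or_isBelow_or_snd_eq hp.1 hq.1 with h' | h' | h' | h'
    · exact Or.inl h'
    · exact Or.inr (Or.inl h')
    · exact Or.inr (Or.inr h')
    · exact absurd h'.1 hne

theorem OneNestedCompatible.ncard_inter_snd_empty_le [Finite X] (h : OneNestedCompatible 𝒮) :
    (𝒮 ∩ {p | p.2 = ∅}).ncard ≤ 2 * Nat.card X - 1 := by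
  rw [ncard_inter_snd_eq, ← ncard_univ]
  exact IsLaminar.ncard_le_two_mul (fun _ h₁ _ h₂ => h.laminar h₁ h₂ rfl)
    (fun _ _ => subset_univ _) fun _ hS => nonempty_iff_ne_empty.2 (h.1 _ hS).1

end OneNestedCompatible

theorem card_le_three_n_sub_two_general {X : Type*} [Fintype X]
    (𝒮 : Set (Set X × Set X)) (h : OneNestedCompatible 𝒮) :
    𝒮.ncard ≤ 3 * Fintype.card X - 2 := by
  have h₀ := h.ncard_inter_snd_empty_le
  have h₁ := h.isHeadedSystem.ncard_le
  have := ncard_inter_add_ncard_sdiff_eq_ncard 𝒮 {p | p.2 = ∅}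
  rw [ncard_univ, Nat.card_eq_fintype_card] at h₁
  rw [Nat.card_eq_fintype_card] at h₀
  omega

/-- If `𝒮` is a 1-nested compatible set pair system on a set `X` with `|X| = n`,
then `|𝒮| ≤ 3n − 2`. -/
theorem card_le_three_n_sub_two {X : Type*} [Fintype X] [Nonempty X]
    (𝒮 : Set (Set X × Set X)) (h : OneNestedCompatible 𝒮) :
    𝒮.ncard ≤ 3 * Fintype.card X - 2 :=
  card_le_three_n_sub_two_general 𝒮 h
end
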